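/- arXiv:2103.13882 — 3 statements merged into one kernel-verified Lean document; each statement's English description precedes it below -/
import Mathlib

section
/- Let K be a finite abstract simplicial complex and f : K → ℝ a discrete Morse function. For any simplex σ of K, the two conditions (1) there exists a coface τ of σ with dim τ = dim σ + 1 and f(τ) ≤ f(σ), and (2) there exists a face γ of σ with dim γ = dim σ − 1 and f(γ) ≥ f(σ), cannot both hold. Hence if σ is regular (not critical), exactly one of the two conditions holds. -/
open Finset

attribute [local instance] Classical.propDecidable

/-- A finite abstract simplicial complex: a finite family of nonempty finite sets
(simplices) closed under taking nonempty subsets. -/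
def IsComplex {V : Type*} [DecidableEq V] (K : Finset (Finset V)) : Prop :=
  (∀ σ ∈ K, σ.Nonempty) ∧ ∀ σ ∈ K, ∀ τ : Finset V, τ ⊆ σ → τ.Nonempty → τ ∈ K

/-- A discrete Morse function: for every simplex `σ ∈ K`, at most one coface `β ⊋ σ`
has `f β ≤ f σ`, and at most one face `γ ⊊ σ` has `f γ ≥ f σ`. -/
def IsDMF {V : Type*} [DecidableEq V] (K : Finset (Finset V)) (f : Finset V → ℝ) : Prop :=
  ∀ σ ∈ K,
    (K.filter fun β => σ ⊂ β ∧ f β ≤ f σ).card ≤ 1 ∧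
    (K.filter fun γ => γ ⊂ σ ∧ f σ ≤ f γ).card ≤ 1

/-- A simplex is critical if both counts in the Morse condition are zero. -/
def IsCritical {V : Type*} [DecidableEq V] (K : Finset (Finset V)) (f : Finset V → ℝ)
    (σ : Finset V) : Prop :=
  (K.filter fun β => σ ⊂ β ∧ f β ≤ f σ).card = 0 ∧
  (K.filter fun γ => γ ⊂ σ ∧ f σ ≤ f γ).card = 0

/-- The decreasing list of `f0`-values of the vertices of a simplex. -/
noncomputable def descList {V : Type*} [DecidableEq V] (f0 : V → ℝ) (σ : Finset V) :
    List ℝ :=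
  ((σ.image f0).sort (· ≤ ·)).reverse

/-- Lexicographic comparison of simplices: compare the decreasing sequences of
`f0`-values of their vertices lexicographically. -/
noncomputable def lexLt {V : Type*} [DecidableEq V] (f0 : V → ℝ) (σ τ : Finset V) : Prop :=
  List.Lex (· < ·) (descList f0 σ) (descList f0 τ)

/-- `τ` is the rightmost face of `σ`: the codimension-one face of `σ` of maximum
lexicographic value. -/
noncomputable def IsRChild {V : Type*} [DecidableEq V] (K : Finset (Finset V)) (f0 : V → ℝ)
    (σ τ : Finset V) : Prop :=
  τ ∈ K ∧ τ ⊂ σ ∧ τ.card + 1 = σ.card ∧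
    ∀ τ' ∈ K, τ' ⊂ σ → τ'.card + 1 = σ.card → τ' = τ ∨ lexLt f0 τ' τ

/-- `σ` is the leftmost coface of `τ`: the codimension-one coface of `τ` of minimum
lexicographic value. -/
noncomputable def IsLParent {V : Type*} [DecidableEq V] (K : Finset (Finset V)) (f0 : V → ℝ)
    (τ σ : Finset V) : Prop :=
  σ ∈ K ∧ τ ⊂ σ ∧ τ.card + 1 = σ.card ∧
    ∀ σ' ∈ K, τ ⊂ σ' → τ.card + 1 = σ'.card → σ' = σ ∨ lexLt f0 σ σ'

/-- The rightmost face of `σ` (an arbitrary default if none exists). -/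
noncomputable def rchild {V : Type*} [DecidableEq V] (K : Finset (Finset V)) (f0 : V → ℝ)
    (σ : Finset V) : Finset V :=
  if h : ∃ τ, IsRChild K f0 σ τ then h.choose else ∅

/-- `σ` is a left-right parent: the leftmost coface of its rightmost face is `σ` itself,
i.e. `ℓ(r(σ)) = σ`. -/
noncomputable def LeftRightParent {V : Type*} [DecidableEq V] (K : Finset (Finset V))
    (f0 : V → ℝ) (σ : Finset V) : Prop :=
  (∃ τ, IsRChild K f0 σ τ) ∧ IsLParent K f0 (rchild K f0 σ) σ

/-- The maximum `f0`-value over the vertices of a simplex. -/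
noncomputable def maxVal {V : Type*} [DecidableEq V] (f0 : V → ℝ) (σ : Finset V) : ℝ :=
  if h : σ.Nonempty then σ.sup' h f0 else 0

/-- For a discrete Morse function, a simplex cannot simultaneously have a
codimension-one coface with smaller-or-equal value and a codimension-one face with
greater-or-equal value; hence if it is regular, exactly one of the two holds. -/
theorem stmt_0 {V : Type*} [DecidableEq V] (K : Finset (Finset V)) (f : Finset V → ℝ)
    (hK : IsComplex K) (hf : IsDMF K f) (σ : Finset V) (hσ : σ ∈ K) :
    ¬((∃ τ ∈ K, σ ⊂ τ ∧ τ.card = σ.card + 1 ∧ f τ ≤ f σ) ∧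
        (∃ γ ∈ K, γ ⊂ σ ∧ γ.card + 1 = σ.card ∧ f σ ≤ f γ)) ∧
      (¬ IsCritical K f σ →
        Xor' (∃ τ ∈ K, σ ⊂ τ ∧ τ.card = σ.card + 1 ∧ f τ ≤ f σ)
          (∃ γ ∈ K, γ ⊂ σ ∧ γ.card + 1 = σ.card ∧ f σ ≤ f γ)) := by
  have key1 : ∀ a b : Finset V, ∀ s : Finset (Finset V), a ∈ s → b ∈ s → a ≠ b →
      ¬ s.card ≤ 1 := by
    intro a b s ha hb hab h
    exact absurd (Finset.one_lt_card.mpr ⟨a, ha, b, hb, hab⟩) (not_lt.mpr h)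
  have hnotboth : ¬((∃ τ ∈ K, σ ⊂ τ ∧ τ.card = σ.card + 1 ∧ f τ ≤ f σ) ∧
      (∃ γ ∈ K, γ ⊂ σ ∧ γ.card + 1 = σ.card ∧ f σ ≤ f γ)) := by
    rintro ⟨⟨τ, hτK, hστ, hcτ, hfτ⟩, ⟨γ, hγK, hγσ, hcγ, hfγ⟩⟩
    have h1 := (hf γ hγK).1
    refine key1 σ τ _ ?_ ?_ ?_ h1
    · exact Finset.mem_filter.mpr ⟨hσ, hγσ, hfγ⟩
    · exact Finset.mem_filter.mpr ⟨hτK, lt_trans hγσ hστ, le_trans hfτ hfγ⟩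
    · intro h; exact absurd hcτ (by simp [h])
  refine ⟨hnotboth, ?_⟩
  intro hnc
  have hor : (∃ β ∈ K, σ ⊂ β ∧ f β ≤ f σ) ∨ (∃ γ ∈ K, γ ⊂ σ ∧ f σ ≤ f γ) := by
    by_contra h
    push_neg at h
    apply hnc
    constructor
    · rw [Finset.card_eq_zero, Finset.filter_eq_empty_iff]
      intro β hβ ⟨h1, h2⟩
      exact absurd h2 (not_le.mpr (h.1 β hβ h1))
    · rw [Finset.card_eq_zero, Finset.filter_eq_empty_iff]
      intro γ hγ ⟨h1, h2⟩
      exact absurd h2 (not_le.mpr (h.2 γ hγ h1))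
  have hA : (∃ β ∈ K, σ ⊂ β ∧ f β ≤ f σ) → ∃ τ ∈ K, σ ⊂ τ ∧ τ.card = σ.card + 1 ∧ f τ ≤ f σ := by
    rintro ⟨β0, hβ0K, hβ0s, hβ0f⟩
    -- take a minimal-cardinality coface with f ≤ f σ
    set S := K.filter fun β => σ ⊂ β ∧ f β ≤ f σ with hS
    have hβ0S : β0 ∈ S := Finset.mem_filter.mpr ⟨hβ0K, hβ0s, hβ0f⟩
    obtain ⟨β, hβS, hmin⟩ := S.exists_min_image Finset.card ⟨β0, hβ0S⟩
    obtain ⟨hβK, hσβ, hfβ⟩ := Finset.mem_filter.mp hβS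
    refine ⟨β, hβK, hσβ, ?_, hfβ⟩
    by_contra hcard
    have hlt : σ.card + 1 < β.card := by
      have := Finset.card_lt_card hσβ
      omega
    -- there are two distinct elements of β \ σ
    have hsd : 1 < (β \ σ).card := by
      have : (β \ σ).card = β.card - σ.card := Finset.card_sdiff_of_subset hσβ.subset
      omega
    obtain ⟨x, hx, y, hy, hxy⟩ := Finset.one_lt_card.mp hsd
    have hxβ := (Finset.mem_sdiff.mp hx).1
    have hxσ := (Finset.mem_sdiff.mp hx).2
    have hyβ := (Finset.mem_sdiff.mp hy).1
    have hyσ := (Finset.mem_sdiff.mp hy).2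
    have hσne : σ.Nonempty := hK.1 σ hσ
    have herase : ∀ z w : V, z ∈ β \ σ → w ∈ β \ σ → z ≠ w →
        β.erase z ∈ K ∧ σ ⊂ β.erase z ∧ f σ < f (β.erase z) := by
      intro z w hz hw hzw
      have hzβ := (Finset.mem_sdiff.mp hz).1
      have hzσ := (Finset.mem_sdiff.mp hz).2
      have hwβ := (Finset.mem_sdiff.mp hw).1
      have hwσ := (Finset.mem_sdiff.mp hw).2
      have hsub : σ ⊆ β.erase z := fun a ha =>
        Finset.mem_erase.mpr ⟨fun h => hzσ (h ▸ ha), hσβ.subset ha⟩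
      have hss : σ ⊂ β.erase z :=
        Finset.ssubset_iff_of_subset hsub |>.mpr
          ⟨w, Finset.mem_erase.mpr ⟨fun h => hzw h.symm, hwβ⟩, hwσ⟩
      have hne : (β.erase z).Nonempty := hσne.mono hsub
      have hmem : β.erase z ∈ K := hK.2 β hβK _ (Finset.erase_subset _ _) hne
      refine ⟨hmem, hss, ?_⟩
      by_contra hle
      push_neg at hle
      have : β.erase z ∈ S := Finset.mem_filter.mpr ⟨hmem, hss, hle⟩
      have := hmin _ this
      have : (β.erase z).card < β.card := Finset.card_erase_lt_of_mem hzβ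
      omega
    obtain ⟨h1K, h1ss, h1f⟩ := herase x y hx hy hxy
    obtain ⟨h2K, h2ss, h2f⟩ := herase y x hy hx hxy.symm
    -- β has two faces with f ≥ f β
    have h2 := (hf β hβK).2
    refine key1 (β.erase x) (β.erase y) _ ?_ ?_ ?_ h2
    · exact Finset.mem_filter.mpr ⟨h1K, Finset.erase_ssubset hxβ, le_trans hfβ h1f.le⟩
    · exact Finset.mem_filter.mpr ⟨h2K, Finset.erase_ssubset hyβ, le_trans hfβ h2f.le⟩
    · intro h
      have : x ∈ β.erase y := Finset.mem_erase.mpr ⟨hxy, hxβ⟩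
      rw [← h] at this
      exact (Finset.mem_erase.mp this).1 rfl
  have hB : (∃ γ ∈ K, γ ⊂ σ ∧ f σ ≤ f γ) → ∃ γ ∈ K, γ ⊂ σ ∧ γ.card + 1 = σ.card ∧ f σ ≤ f γ := by
    rintro ⟨γ0, hγ0K, hγ0s, hγ0f⟩
    set S := K.filter fun γ => γ ⊂ σ ∧ f σ ≤ f γ with hS
    have hγ0S : γ0 ∈ S := Finset.mem_filter.mpr ⟨hγ0K, hγ0s, hγ0f⟩
    obtain ⟨γ, hγS, hmax⟩ := S.exists_max_image Finset.card ⟨γ0, hγ0S⟩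
    obtain ⟨hγK, hγσ, hfγ⟩ := Finset.mem_filter.mp hγS
    refine ⟨γ, hγK, hγσ, ?_, hfγ⟩
    by_contra hcard
    have hlt : γ.card + 1 < σ.card := by
      have := Finset.card_lt_card hγσ
      omega
    have hsd : 1 < (σ \ γ).card := by
      have : (σ \ γ).card = σ.card - γ.card := Finset.card_sdiff_of_subset hγσ.subset
      omega
    obtain ⟨x, hx, y, hy, hxy⟩ := Finset.one_lt_card.mp hsd
    have hinsert : ∀ z : V, z ∈ σ \ γ →
        insert z γ ∈ K ∧ γ ⊂ insert z γ ∧ insert z γ ⊂ σ ∧ f (insert z γ) < f σ := by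
      intro z hz
      have hzσ := (Finset.mem_sdiff.mp hz).1
      have hzγ := (Finset.mem_sdiff.mp hz).2
      have hsub : insert z γ ⊆ σ := Finset.insert_subset hzσ hγσ.subset
      have hss1 : γ ⊂ insert z γ := Finset.ssubset_insert hzγ
      have hss2 : insert z γ ⊂ σ := by
        refine Finset.ssubset_iff_of_subset hsub |>.mpr ?_
        by_contra h
        push_neg at h
        have : σ ⊆ insert z γ := fun a ha => by
          by_contra h2; exact h2 (h a ha)
        have : σ.card ≤ (insert z γ).card := Finset.card_le_card this
        have : (insert z γ).card ≤ γ.card + 1 := Finset.card_insert_le _ _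
        omega
      have hmem : insert z γ ∈ K := hK.2 σ hσ _ hsub (Finset.insert_nonempty _ _)
      refine ⟨hmem, hss1, hss2, ?_⟩
      by_contra hle
      push_neg at hle
      have : insert z γ ∈ S := Finset.mem_filter.mpr ⟨hmem, hss2, hle⟩
      have := hmax _ this
      have : γ.card < (insert z γ).card := Finset.card_lt_card hss1
      omega
    obtain ⟨h1K, h1a, h1b, h1f⟩ := hinsert x hx
    obtain ⟨h2K, h2a, h2b, h2f⟩ := hinsert y hy
    have h1 := (hf γ hγK).1
    refine key1 (insert x γ) (insert y γ) _ ?_ ?_ ?_ h1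
    · exact Finset.mem_filter.mpr ⟨h1K, h1a, le_trans h1f.le hfγ⟩
    · exact Finset.mem_filter.mpr ⟨h2K, h2a, le_trans h2f.le hfγ⟩
    · intro h
      have hxγ := (Finset.mem_sdiff.mp hx).2
      have : x ∈ insert y γ := h ▸ Finset.mem_insert_self x γ
      rcases Finset.mem_insert.mp this with h' | h'
      · exact hxy h'
      · exact hxγ h'
  rcases hor with h | h
  · exact Or.inl ⟨hA h, fun h2 => hnotboth ⟨hA h, h2⟩⟩
  · exact Or.inr ⟨hB h, fun h2 => hnotboth ⟨h2, hB h⟩⟩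
end

section
/- Let K be a finite abstract simplicial complex and f₀ an injective real-valued function on the vertices of K. If σ ∈ K is a left-right parent, then its rightmost face r(σ) is not itself a left-right parent. -/
open Finset

attribute [local instance] Classical.propDecidable

/-
Deleting the vertex of least `f0`-value from a simplex gives its lexicographically largest
facet, and adding the available vertex of least `f0`-value to a simplex gives its
lexicographically smallest coface. Hence `r(σ) = σ \ {m}` with `m` the least vertex of `σ`,
and `ρ = r(r(σ)) = r(σ) \ {m'}` with `f0 m < f0 m'`. But then `ρ ∪ {m}` is a coface of `ρ`
lexicographically smaller than `ρ ∪ {m'} = r(σ)`, so `ℓ(ρ) ≠ r(σ)`.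
-/

theorem List.lt_of_mem_of_forall_lt_mem_iff {α : Type*} [LinearOrder α] :
    ∀ {l₁ l₂ : List α}, l₁.Pairwise (· > ·) → l₂.Pairwise (· > ·) → ∀ {y : α},
      y ∈ l₂ → y ∉ l₁ → (∀ z, y < z → (z ∈ l₁ ↔ z ∈ l₂)) → l₁ < l₂
  | _, [], _, _, _, hy₂, _, _ => absurd hy₂ List.not_mem_nil
  | [], _ :: _, _, _, _, _, _, _ => List.Lex.nil
  | a :: l₁, b :: l₂, h₁, h₂, y, hy₂, hy₁, hagree => by
    simp only [List.pairwise_cons] at h₁ h₂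
    rcases lt_trichotomy a b with hab | rfl | hba
    · exact List.Lex.rel hab
    · refine List.Lex.cons (lt_of_mem_of_forall_lt_mem_iff h₁.2 h₂.2 (y := y) ?_ ?_ ?_) <;>
        grind
    -- `y ≤ b < a`, so `a` would lie in `b :: l₂`, all of whose entries are `≤ b`.
    · grind

section

variable {V : Type*} [DecidableEq V] {K : Finset (Finset V)} {f0 : V → ℝ}

lemma mem_descList {s : Finset V} {x : ℝ} : x ∈ descList f0 s ↔ x ∈ s.image f0 := by
  rw [descList, List.mem_reverse, Finset.mem_sort]

lemma pairwise_gt_descList (s : Finset V) : (descList f0 s).Pairwise (· > ·) := by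
  rw [descList, List.pairwise_reverse]
  exact (Finset.sortedLT_sort _).pairwise

lemma lexLt_asymm {s t : Finset V} (h : lexLt f0 s t) : ¬ lexLt f0 t s :=
  lt_asymm (α := List ℝ) h

lemma lexLt_insert_of_lt {A : Finset V} {m m' : V} (hlt : f0 m < f0 m')
    (hm' : f0 m' ∉ A.image f0) : lexLt f0 (insert m A) (insert m' A) := by
  refine List.lt_of_mem_of_forall_lt_mem_iff (pairwise_gt_descList _) (pairwise_gt_descList _)
    (y := f0 m') ?_ ?_ fun z hz => ?_ <;>
    simp only [mem_descList, Finset.image_insert, Finset.mem_insert] <;> grind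

lemma IsComplex.singleton_mem (hK : IsComplex K) {σ : Finset V} (hσ : σ ∈ K) {v : V}
    (hv : v ∈ σ) : {v} ∈ K :=
  hK.2 σ hσ {v} (Finset.singleton_subset_iff.mpr hv) (Finset.singleton_nonempty v)

lemma rchild_isRChild {σ : Finset V} (h : ∃ τ, IsRChild K f0 σ τ) :
    IsRChild K f0 σ (rchild K f0 σ) := by
  rw [rchild, dif_pos h]
  exact h.choose_spec

lemma IsRChild.exists_eq_insert {σ τ : Finset V} (h : IsRChild K f0 σ τ) :
    ∃ m ∉ τ, insert m τ = σ :=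
  Finset.exists_eq_insert_iff.mpr ⟨h.2.1.subset, h.2.2.1⟩

lemma IsRChild.lt_of_mem (hK : IsComplex K) {σ τ : Finset V} (hσ : σ ∈ K)
    (hinj : Set.InjOn f0 σ) (h : IsRChild K f0 σ τ) {m m' : V} (hm : m ∉ τ)
    (hmσ : insert m τ = σ) (hm' : m' ∈ τ) : f0 m < f0 m' := by
  obtain ⟨-, hτσ, hcard, hmax⟩ := h
  have hmσ' : m ∈ σ := hmσ ▸ Finset.mem_insert_self m τ
  have hm'σ : m' ∈ σ := hτσ.subset hm'
  have hmm' : m ≠ m' := fun h => hm (h ▸ hm')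
  set B := τ.erase m'
  have hτ : insert m' B = τ := Finset.insert_erase hm'
  have hσm' : insert m B = σ.erase m' := by
    rw [← hmσ, Finset.erase_insert_of_ne hmm']
  have hface : σ.erase m' ∈ K :=
    hK.2 σ hσ _ (Finset.erase_subset _ _) (hσm' ▸ Finset.insert_nonempty m B)
  rcases hmax _ hface (Finset.erase_ssubset hm'σ)
    (by rw [Finset.card_erase_of_mem hm'σ]; omega) with heq | hlex
  · exact absurd (heq ▸ hσm' ▸ Finset.mem_insert_self m B) hm
  · rcases lt_trichotomy (f0 m) (f0 m') with hlt | heq | hgt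
    · exact hlt
    · exact absurd (hinj hmσ' hm'σ heq) hmm'
    · refine absurd (lexLt_insert_of_lt hgt ?_) (hσm' ▸ hτ ▸ lexLt_asymm hlex)
      intro hmB
      obtain ⟨a, ha, hfa⟩ := Finset.mem_image.mp hmB
      have hma : a = m := hinj (hτσ.subset (Finset.mem_of_mem_erase ha)) hmσ' hfa
      exact hm (hma ▸ Finset.mem_of_mem_erase ha)

lemma IsLParent.lt_of_insert_mem {ρ τ : Finset V} (h : IsLParent K f0 ρ τ) {m' v : V}
    (hm' : m' ∉ ρ) (hm'τ : insert m' ρ = τ) (hv : v ∉ τ) (hvK : insert v ρ ∈ K)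
    (hinj : Set.InjOn f0 ↑(insert v τ)) : f0 m' < f0 v := by
  have hvm' : v ≠ m' := fun h => hv (h ▸ hm'τ ▸ Finset.mem_insert_self m' ρ)
  have hm'τ' : m' ∈ insert v τ :=
    Finset.mem_insert_of_mem (hm'τ ▸ Finset.mem_insert_self m' ρ)
  have hvρ : v ∉ ρ := fun h => hv (hm'τ ▸ Finset.mem_insert_of_mem h)
  rcases h.2.2.2 _ hvK (Finset.ssubset_insert hvρ) (Finset.card_insert_of_notMem hvρ).symm
    with heq | hlex
  · exact absurd (heq ▸ Finset.mem_insert_self v ρ) hv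
  · rcases lt_trichotomy (f0 m') (f0 v) with hlt | heq | hgt
    · exact hlt
    · exact absurd (hinj (Finset.mem_insert_self v τ) hm'τ' heq.symm) hvm'
    · refine absurd (lexLt_insert_of_lt hgt ?_) (hm'τ ▸ lexLt_asymm hlex)
      intro hm'ρ
      obtain ⟨a, ha, hfa⟩ := Finset.mem_image.mp hm'ρ
      have ham' : a = m' :=
        hinj (Finset.mem_insert_of_mem (hm'τ ▸ Finset.mem_insert_of_mem ha)) hm'τ' hfa
      exact hm' (ham' ▸ ha)

end

/-- The rightmost face of a left-right parent is not itself a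
left-right parent. -/
theorem stmt_6 {V : Type*} [DecidableEq V] (K : Finset (Finset V)) (f0 : V → ℝ)
    (hK : IsComplex K) (hinj : Set.InjOn f0 {v : V | {v} ∈ K})
    (σ : Finset V) (hσ : σ ∈ K) (h : LeftRightParent K f0 σ) :
    ¬ LeftRightParent K f0 (rchild K f0 σ) := by
  rintro ⟨hexρ, hleft⟩
  set τ := rchild K f0 σ
  set ρ := rchild K f0 τ
  have hright : IsRChild K f0 σ τ := rchild_isRChild h.1
  have hright' : IsRChild K f0 τ ρ := rchild_isRChild hexρ
  obtain ⟨m, hm, hmσ⟩ := hright.exists_eq_insert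
  obtain ⟨m', hm', hm'τ⟩ := hright'.exists_eq_insert
  have hinjσ : Set.InjOn f0 σ := hinj.mono fun v hv => hK.singleton_mem hσ hv
  have hmσ' : m ∈ σ := hmσ ▸ Finset.mem_insert_self m τ
  have hρσ : ρ ⊆ σ := hright'.2.1.subset.trans hright.2.1.subset
  have hmρK : insert m ρ ∈ K :=
    hK.2 σ hσ _ (Finset.insert_subset hmσ' hρσ) (Finset.insert_nonempty m ρ)
  have hlt : f0 m < f0 m' :=
    hright.lt_of_mem hK hσ hinjσ hm hmσ (hm'τ ▸ Finset.mem_insert_self m' ρ)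
  have hgt : f0 m' < f0 m := hleft.lt_of_insert_mem hm' hm'τ hm hmρK (hmσ ▸ hinjσ)
  exact lt_asymm hlt hgt
end

section
/- Let K be a finite abstract simplicial complex and f₀ an injective real-valued function on the vertices of K. Let H be the set of left-right parents of K, let T = {r(σ) : σ ∈ H} be the set of their rightmost faces, and let C = K \ (H ∪ T). Then the map σ ↦ r(σ) is a bijection from H onto T, the sets H, T, C are pairwise disjoint, and H ∪ T ∪ C = K. -/
open Finset

attribute [local instance] Classical.propDecidable

lemma lexLt_asymm_s7 {V : Type*} [DecidableEq V] {f0 : V → ℝ} {a b : Finset V}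
    (h : lexLt f0 a b) (h' : lexLt f0 b a) : False := by
  unfold lexLt at h h'
  exact asymm h h'

lemma rchild_spec {V : Type*} [DecidableEq V] (K : Finset (Finset V)) (f0 : V → ℝ)
    {σ : Finset V} (h : ∃ τ, IsRChild K f0 σ τ) :
    IsRChild K f0 σ (rchild K f0 σ) := by
  rw [rchild, dif_pos h]
  exact h.choose_spec

lemma lparent_unique {V : Type*} [DecidableEq V] {K : Finset (Finset V)} {f0 : V → ℝ}
    {τ σ1 σ2 : Finset V} (h1 : IsLParent K f0 τ σ1) (h2 : IsLParent K f0 τ σ2) :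
    σ1 = σ2 := by
  rcases h2.2.2.2 σ1 h1.1 h1.2.1 h1.2.2.1 with h | h
  · exact h
  rcases h1.2.2.2 σ2 h2.1 h2.2.1 h2.2.2.1 with h' | h'
  · exact h'.symm
  exact absurd h (fun hh => lexLt_asymm_s7 h' hh)

lemma eq_insert_of_ssubset_card {V : Type*} [DecidableEq V] {τ σ : Finset V}
    (hsub : τ ⊂ σ) (hcard : τ.card + 1 = σ.card) :
    ∃ m, m ∉ τ ∧ σ = insert m τ := by
  obtain ⟨m, hmσ, hmτ⟩ := Finset.exists_of_ssubset hsub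
  refine ⟨m, hmτ, ?_⟩
  have hsub' : insert m τ ⊆ σ := Finset.insert_subset hmσ hsub.subset
  have : σ.card ≤ (insert m τ).card := by
    rw [Finset.card_insert_of_notMem hmτ, hcard]
  exact (Finset.eq_of_subset_of_card_le hsub' this).symm

lemma not_lrp_rchild {V : Type*} [DecidableEq V] {K : Finset (Finset V)} {f0 : V → ℝ}
    (hK : IsComplex K) {σ : Finset V} (hσ : σ ∈ K)
    (hlrp : LeftRightParent K f0 σ) (hτ : LeftRightParent K f0 (rchild K f0 σ)) : False := by
  set τ := rchild K f0 σ with hτdef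
  have hRσ : IsRChild K f0 σ τ := rchild_spec K f0 hlrp.1
  set ρ := rchild K f0 τ with hρdef
  have hRτ : IsRChild K f0 τ ρ := rchild_spec K f0 hτ.1
  have hLρτ : IsLParent K f0 ρ τ := hτ.2
  obtain ⟨m, hmτ, hσeq⟩ := eq_insert_of_ssubset_card hRσ.2.1 hRσ.2.2.1
  obtain ⟨m', hm'ρ, hτeq⟩ := eq_insert_of_ssubset_card hRτ.2.1 hRτ.2.2.1
  have hρτ : ρ ⊆ τ := hRτ.2.1.subset
  have hτσ : τ ⊆ σ := hRσ.2.1.subset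
  have hmρ : m ∉ ρ := fun h => hmτ (hρτ h)
  have hm'τ : m' ∈ τ := by rw [hτeq]; exact Finset.mem_insert_self _ _
  have hmm' : m ≠ m' := fun h => hmτ (h ▸ hm'τ)
  set γ := insert m ρ with hγdef
  have hγsubσ : γ ⊆ σ :=
    Finset.insert_subset (by rw [hσeq]; exact Finset.mem_insert_self _ _)
      (hρτ.trans hτσ)
  have hγK : γ ∈ K := hK.2 σ hσ γ hγsubσ (Finset.insert_nonempty _ _)
  have hγτ : γ ≠ τ := by
    intro h
    exact hmτ (h ▸ Finset.mem_insert_self m ρ)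
  have hcardγ : γ.card = ρ.card + 1 := Finset.card_insert_of_notMem hmρ
  have hcardτ : ρ.card + 1 = τ.card := hRτ.2.2.1
  have hcardσ : τ.card + 1 = σ.card := hRσ.2.2.1
  have hγσ : γ ⊂ σ := by
    refine Finset.ssubset_iff_subset_ne.mpr ⟨hγsubσ, ?_⟩
    intro h
    have : m' ∈ γ := by rw [h]; exact hτσ hm'τ
    rcases Finset.mem_insert.mp this with h' | h'
    · exact hmm' h'.symm
    · exact hm'ρ h'
  have h1 : lexLt f0 γ τ := by
    rcases hRσ.2.2.2 γ hγK hγσ (by omega) with h | h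
    · exact absurd h hγτ
    · exact h
  have h2 : lexLt f0 τ γ := by
    rcases hLρτ.2.2.2 γ hγK (Finset.ssubset_insert hmρ) (by omega) with h | h
    · exact absurd h hγτ
    · exact h
  exact lexLt_asymm_s7 h1 h2

/-- Letting `H` be the left-right parents, `T` their rightmost faces and
`C` the rest, the map `σ ↦ r σ` is a bijection from `H` onto `T`, the three sets are
pairwise disjoint, and their union is `K`. -/
theorem stmt_7 {V : Type*} [DecidableEq V] (K : Finset (Finset V)) (f0 : V → ℝ)
    (hK : IsComplex K) (hinj : Set.InjOn f0 {v : V | {v} ∈ K}) :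
    let H := K.filter (LeftRightParent K f0)
    let T := H.image (rchild K f0)
    let C := K \ (H ∪ T)
    Set.BijOn (rchild K f0) ↑H ↑T ∧
      Disjoint H T ∧ Disjoint H C ∧ Disjoint T C ∧ H ∪ T ∪ C = K := by
  intro H T C
  have hHK : H ⊆ K := filter_subset _ _
  have hmemH : ∀ σ ∈ H, LeftRightParent K f0 σ := fun σ h => (mem_filter.mp h).2
  have hTK : T ⊆ K := by
    intro τ hτ
    obtain ⟨σ, hσ, rfl⟩ := mem_image.mp hτ
    exact (rchild_spec K f0 (hmemH σ hσ).1).1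
  have hinjH : Set.InjOn (rchild K f0) ↑H := by
    intro σ1 h1 σ2 h2 heq
    have l1 := (hmemH σ1 (by exact_mod_cast h1)).2
    have l2 := (hmemH σ2 (by exact_mod_cast h2)).2
    rw [heq] at l1
    exact lparent_unique l1 l2
  have hdisjHT : Disjoint H T := by
    rw [Finset.disjoint_left]
    intro τ hτH hτT
    obtain ⟨σ, hσ, rfl⟩ := mem_image.mp hτT
    exact not_lrp_rchild hK (hHK hσ) (hmemH σ hσ) (hmemH _ hτH)
  refine ⟨⟨?_, hinjH, ?_⟩, hdisjHT, ?_, ?_, ?_⟩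
  · intro σ hσ
    exact_mod_cast mem_image_of_mem _ (by exact_mod_cast hσ)
  · intro τ hτ
    obtain ⟨σ, hσ, rfl⟩ := mem_image.mp (by exact_mod_cast hτ : τ ∈ T)
    exact ⟨σ, by exact_mod_cast hσ, rfl⟩
  · exact Finset.disjoint_sdiff.mono_left subset_union_left
  · exact Finset.disjoint_sdiff.mono_left subset_union_right
  · exact Finset.union_sdiff_of_subset (union_subset hHK hTK)
end
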